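/- arXiv:2001.08767 — 2 statements merged into one kernel-verified Lean document; each statement's English description precedes it below -/
import Mathlib

section
/- There exist a bias parameter β ∈ [0,1), position discounts v, and two utility vectors w, w' on two items in two groups, such that no fixed constraint set K of rankings guarantees that the observed-utility-maximizing ranking within K attains the maximum latent utility for both w and w'. Concretely: with m = n = 2, v = (2,1), groups G_a = {1}, G_b = {2}, bias β_a = 1, β_b = 1/4, utilities w = (2,1) and w' = (1,2), and observed utilities ŵ_i = β_{group(i)} w_i, there is no set K of the two possible rankings such that argmax over K of observed utility equals the latent-utility optimum for both w and w'. -/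
/-!
The latent optimum for `w = (2,1)` is the identity ranking and for `w' = (1,2)` it is the
swap, each uniquely so. A constraint set serving both must therefore contain both rankings,
but then the observed utility `ŵ' = (1, 1/2)` still strictly prefers the identity, so the swap
is never an observed maximizer in `K`. On two items everything reduces to
`U u 1 - U u (swap 0 1) = (u 0 - u 1) * (v 0 - v 1)`.
-/

open Equiv

lemma Equiv.Perm.fin_two_eq_one_or_eq_swap (x : Perm (Fin 2)) : x = 1 ∨ x = swap 0 1 := by
  revert x; decide

def rankingUtility (u v : Fin 2 → ℝ) (x : Perm (Fin 2)) : ℝ := ∑ i, u i * v (x i)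

section TwoItems

variable {u v : Fin 2 → ℝ}

lemma rankingUtility_one_sub_swap (u v : Fin 2 → ℝ) :
    rankingUtility u v 1 - rankingUtility u v (swap 0 1) = (u 0 - u 1) * (v 0 - v 1) := by
  simp only [rankingUtility, Fin.sum_univ_two, Perm.one_apply, swap_apply_left,
    swap_apply_right]
  ring

lemma rankingUtility_swap_lt_one (h : 0 < (u 0 - u 1) * (v 0 - v 1)) :
    rankingUtility u v (swap 0 1) < rankingUtility u v 1 := by
  linarith [rankingUtility_one_sub_swap u v]

lemma rankingUtility_one_lt_swap (h : (u 0 - u 1) * (v 0 - v 1) < 0) :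
    rankingUtility u v 1 < rankingUtility u v (swap 0 1) := by
  linarith [rankingUtility_one_sub_swap u v]

lemma eq_one_of_forall_rankingUtility_le (h : 0 < (u 0 - u 1) * (v 0 - v 1))
    {x : Perm (Fin 2)} (hx : ∀ z, rankingUtility u v z ≤ rankingUtility u v x) : x = 1 := by
  refine x.fin_two_eq_one_or_eq_swap.resolve_right fun hswap => ?_
  subst hswap
  exact (hx 1).not_gt (rankingUtility_swap_lt_one h)

lemma eq_swap_of_forall_rankingUtility_le (h : (u 0 - u 1) * (v 0 - v 1) < 0)
    {x : Perm (Fin 2)} (hx : ∀ z, rankingUtility u v z ≤ rankingUtility u v x) :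
    x = swap 0 1 := by
  refine x.fin_two_eq_one_or_eq_swap.resolve_left fun hone => ?_
  subst hone
  exact (hx (swap 0 1)).not_gt (rankingUtility_one_lt_swap h)

end TwoItems

/-- no fixed constraint set of rankings works for both utility vectors.
Items: `0 ∈ G_a` (bias `1`), `1 ∈ G_b` (bias `1/4`); `v = (2,1)`; `w = (2,1)`,
`w' = (1,2)`; observed utilities `ŵ = (2, 1/4)`, `ŵ' = (1, 1/2)`. A ranking is a
permutation `x` of `Fin 2` mapping items to positions, with utility
`∑ i, u i * v (x i)`. There is no nonempty set `K` of rankings such that, for both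
utility profiles, some observed-utility maximizer within `K` attains the maximum
latent utility. -/
theorem no_fixed_constraint_mitigates_bias :
    let v : Fin 2 → ℝ := ![2, 1]
    let w : Fin 2 → ℝ := ![2, 1]
    let w' : Fin 2 → ℝ := ![1, 2]
    let what : Fin 2 → ℝ := ![1 * 2, (1/4) * 1]
    let what' : Fin 2 → ℝ := ![1 * 1, (1/4) * 2]
    let U : (Fin 2 → ℝ) → Equiv.Perm (Fin 2) → ℝ := fun u x => ∑ i : Fin 2, u i * v (x i)
    ¬ ∃ K : Set (Equiv.Perm (Fin 2)), K.Nonempty ∧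
        (∃ x ∈ K, (∀ y ∈ K, U what y ≤ U what x) ∧
          ∀ z : Equiv.Perm (Fin 2), U w z ≤ U w x) ∧
        (∃ x ∈ K, (∀ y ∈ K, U what' y ≤ U what' x) ∧
          ∀ z : Equiv.Perm (Fin 2), U w' z ≤ U w' x) := by
  intro v w w' what what' U
  rintro ⟨K, -, ⟨x, hxK, -, hx_opt⟩, ⟨y, -, hy_obs, hy_opt⟩⟩
  have hx : x = 1 :=
    eq_one_of_forall_rankingUtility_le (u := w) (v := v) (by norm_num [w, v]) hx_opt
  have hy : y = swap 0 1 :=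
    eq_swap_of_forall_rankingUtility_le (u := w') (v := v) (by norm_num [w', v]) hy_opt
  subst hx hy
  exact (hy_obs 1 hxK).not_gt <|
    rankingUtility_swap_lt_one (u := what') (v := v) (by norm_num [what', v])
end

section
/- Let S be a uniformly random m_b-subset of [m_a+m_b] with n ≤ min(m_a, m_b), and let N_{kb} = |S ∩ [k]| for k ≤ n. Then for all δ ≥ 2, P(N_{kb} ≤ E[N_{kb}] − δ) ≤ exp(−2(δ²−1)/(k+1)), where E[N_{kb}] = k·m_b/(m_a+m_b). -/
/-!
Chernoff's method. For `l ≥ 0`, Markov's inequality bounds the number of `b`-subsets `S` of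
`[a + b]` with `|S ∩ [k]| ≤ μ - δ` by `exp (l (μ - δ))` times the generating function
`M_k (x) = ∑_S x ^ |S ∩ [k]|` at `x = exp (-l)`. Revealing whether `k + 1 ∈ S` expresses
`M_{k+1}` as a weighted sum of `x ^ j` against a factor increasing in `j`; Chebyshev's sum
inequality bounds it by a product of averages, so `M_k ≤ C(a + b, b) (1 - p + p x) ^ k` with
`p = b / (a + b)`: sampling without replacement is dominated by sampling with replacement.
Hoeffding's lemma for a Bernoulli variable and `l = 4 δ / k` then give `exp (-2 δ² / k)`, which
is at most the claimed bound.
-/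

open Finset Real

theorem sum_range_choose_mul_choose {k r : ℕ} (u : ℕ) (hkr : k ≤ r) :
    ∑ j ∈ range (k + 1), k.choose j * u.choose (r - j) = (k + u).choose r := by
  rw [Nat.add_choose_eq, Nat.sum_antidiagonal_eq_sum_range_succ_mk]
  refine sum_subset (range_subset_range.2 (by omega)) fun j hj hjk => ?_
  rw [Nat.choose_eq_zero_of_lt (by simp only [mem_range] at hj hjk; omega), zero_mul]

theorem card_filter_card_inter_eq {α : Type*} [DecidableEq α] {A B : Finset α}
    (hAB : Disjoint A B) {r j : ℕ} (hjr : j ≤ r) :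
    #{S ∈ powersetCard r (A ∪ B) | #(S ∩ A) = j} = (#A).choose j * (#B).choose (r - j) := by
  rw [← card_powersetCard, ← card_powersetCard, ← card_product]
  have hsplit {S : Finset α} (hS : S ⊆ A ∪ B) : S ∩ A ∪ S ∩ B = S := by
    rw [← inter_union_distrib_left, inter_eq_left.2 hS]
  have hdisj (S : Finset α) : Disjoint (S ∩ A) (S ∩ B) :=
    hAB.mono inter_subset_right inter_subset_right
  have hinterA {P Q : Finset α} (hP : P ⊆ A) (hQ : Q ⊆ B) : (P ∪ Q) ∩ A = P := by
    rw [union_inter_distrib_right, inter_eq_left.2 hP,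
      disjoint_iff_inter_eq_empty.1 (hAB.symm.mono_left hQ), union_empty]
  have hinterB {P Q : Finset α} (hP : P ⊆ A) (hQ : Q ⊆ B) : (P ∪ Q) ∩ B = Q := by
    rw [union_inter_distrib_right, inter_eq_left.2 hQ,
      disjoint_iff_inter_eq_empty.1 (hAB.mono_left hP), empty_union]
  refine card_nbij' (fun S => (S ∩ A, S ∩ B)) (fun P => P.1 ∪ P.2) ?_ ?_ ?_ ?_
  · rintro S hS
    simp only [coe_filter, mem_powersetCard, Set.mem_ofPred_eq, coe_product, Set.mem_prod,
      mem_coe] at hS ⊢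
    obtain ⟨⟨hSAB, hSr⟩, hSj⟩ := hS
    have := card_union_of_disjoint (hdisj S)
    rw [hsplit hSAB] at this
    exact ⟨⟨inter_subset_right, hSj⟩, inter_subset_right, by omega⟩
  · rintro ⟨P, Q⟩ hPQ
    simp only [coe_filter, mem_powersetCard, Set.mem_ofPred_eq, coe_product, Set.mem_prod,
      mem_coe] at hPQ ⊢
    obtain ⟨⟨hPA, hPj⟩, hQB, hQr⟩ := hPQ
    refine ⟨⟨union_subset_union hPA hQB, ?_⟩, by rw [hinterA hPA hQB, hPj]⟩
    rw [card_union_of_disjoint (hAB.mono hPA hQB)]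
    omega
  · rintro S hS
    simp only [coe_filter, mem_powersetCard, Set.mem_ofPred_eq] at hS
    exact hsplit hS.1.1
  · rintro ⟨P, Q⟩ hPQ
    simp only [coe_product, Set.mem_prod, mem_coe, mem_powersetCard] at hPQ
    exact Prod.ext (hinterA hPQ.1.1 hPQ.2.1) (hinterB hPQ.1.1 hPQ.2.1)

/-- The number of `b`-subsets of an `(a + b)`-set meeting a fixed `k`-subset in `j` points,
provided `j ≤ b` and `k ≤ a + b` (otherwise the truncated subtractions give junk). -/
def hypergeomCount (a b k j : ℕ) : ℕ := k.choose j * (a + b - k).choose (b - j)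

section HypergeomCount

variable {a b k : ℕ}

theorem sum_hypergeomCount (hk : k ≤ b) :
    ∑ j ∈ range (k + 1), hypergeomCount a b k j = (a + b).choose b := by
  simp only [hypergeomCount]
  rw [sum_range_choose_mul_choose _ hk]
  congr 1
  omega

theorem add_mul_sum_mul_hypergeomCount (hk : k ≤ b) :
    (a + b) * ∑ j ∈ range (k + 1), j * hypergeomCount a b k j = k * b * (a + b).choose b := by
  obtain _ | k := k
  · simp
  have hpascal : (a + b) * (a + b - 1).choose (b - 1) = b * (a + b).choose b := by
    have := Nat.add_one_mul_choose_eq (a + b - 1) (b - 1)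
    rwa [show a + b - 1 + 1 = a + b by omega, show b - 1 + 1 = b by omega, mul_comm _ b] at this
  have hterm (j : ℕ) : (j + 1) * hypergeomCount a b (k + 1) (j + 1) =
      (k + 1) * (k.choose j * (a + b - (k + 1)).choose (b - 1 - j)) := by
    rw [hypergeomCount, ← mul_assoc, mul_comm (j + 1), ← Nat.add_one_mul_choose_eq, mul_assoc,
      Nat.sub_sub, add_comm 1 j]
  rw [sum_range_succ', zero_mul, add_zero, sum_congr rfl fun j _ => hterm j,
    ← mul_sum, sum_range_choose_mul_choose _ (by omega),
    show k + (a + b - (k + 1)) = a + b - 1 by omega, mul_left_comm, hpascal]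
  ring

theorem hypergeomCount_succ_zero (hk : k < a) :
    (a + b - k) * hypergeomCount a b (k + 1) 0 = (a - k) * hypergeomCount a b k 0 := by
  obtain ⟨n, hn⟩ : ∃ n, a + b - k = n + 1 := ⟨a + b - k - 1, by omega⟩
  simp only [hypergeomCount, Nat.choose_zero_right, one_mul, Nat.sub_zero]
  rw [hn, show a + b - (k + 1) = n by omega, show a - k = n + 1 - b by omega,
    mul_comm, Nat.choose_mul_succ_eq, mul_comm]

theorem hypergeomCount_succ_succ {j : ℕ} (hk : k < a) (hj : j < b) :
    (a + b - k) * hypergeomCount a b (k + 1) (j + 1) =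
      (a - k + j + 1) * hypergeomCount a b k (j + 1) + (b - j) * hypergeomCount a b k j := by
  obtain ⟨n, hn⟩ : ∃ n, a + b - k = n + 1 := ⟨a + b - k - 1, by omega⟩
  obtain ⟨r, hr⟩ : ∃ r, b - j = r + 1 := ⟨b - j - 1, by omega⟩
  simp only [hypergeomCount]
  rw [hn, hr, show a + b - (k + 1) = n by omega, show b - (j + 1) = r by omega,
    show a - k + j + 1 = n + 1 - r by omega]
  calc (n + 1) * ((k + 1).choose (j + 1) * n.choose r)
      = k.choose j * ((n + 1) * n.choose r) + k.choose (j + 1) * (n.choose r * (n + 1)) := by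
        rw [Nat.choose_succ_succ]; ring
    _ = _ := by rw [Nat.add_one_mul_choose_eq, Nat.choose_mul_succ_eq]; ring

/- Reveal whether `k + 1 ∈ S`: given `|S ∩ [k]| = j`, this happens for a fraction
`(b - j) / (a + b - k)` of the subsets `S`. -/
theorem mul_sum_hypergeomCount_succ_mul_pow (hka : k < a) (hkb : k < b) (x : ℝ) :
    ((a : ℝ) + b - k) * ∑ j ∈ range (k + 2), (hypergeomCount a b (k + 1) j : ℝ) * x ^ j =
      ∑ j ∈ range (k + 1),
        (hypergeomCount a b k j : ℝ) * x ^ j * ((a - k + j) + (b - j) * x) := by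
  set w : ℕ → ℝ := fun j => hypergeomCount a b k j
  have hA : ((a + b - k : ℕ) : ℝ) = a + b - k := by
    push_cast [Nat.cast_sub (by omega : k ≤ a + b)]; ring
  have h₀ : ((a : ℝ) + b - k) * hypergeomCount a b (k + 1) 0 = (a - k) * w 0 := by
    rw [← hA, ← Nat.cast_sub hka.le, ← Nat.cast_mul, hypergeomCount_succ_zero hka]
    push_cast
    rfl
  have hsucc : ∀ j ∈ range (k + 1), ((a : ℝ) + b - k) * hypergeomCount a b (k + 1) (j + 1) =
      (a - k + (j + 1 : ℕ)) * w (j + 1) + (b - j) * w j := by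
    intro j hj
    have hjb : j < b := by simp only [mem_range] at hj; omega
    have := congrArg (fun n : ℕ => (n : ℝ)) (hypergeomCount_succ_succ hka hjb)
    push_cast [Nat.cast_sub hka.le, Nat.cast_sub hjb.le, Nat.cast_sub (by omega : k ≤ a + b)]
      at this
    rw [this]
    push_cast
    ring
  have htop : w (k + 1) = 0 := by simp [w, hypergeomCount, Nat.choose_succ_self]
  calc ((a : ℝ) + b - k) * ∑ j ∈ range (k + 2), (hypergeomCount a b (k + 1) j : ℝ) * x ^ j
      = ∑ j ∈ range (k + 1), ((a - k + (j + 1 : ℕ)) * w (j + 1) * x ^ (j + 1)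
          + (b - j) * w j * x ^ (j + 1)) + (a - k + (0 : ℕ)) * w 0 * x ^ 0 := by
        rw [mul_sum, sum_range_succ', ← mul_assoc, h₀, Nat.cast_zero, add_zero]
        congr 1
        refine sum_congr rfl fun j hj => ?_
        rw [← mul_assoc, hsucc j hj]
        ring
    _ = ∑ j ∈ range (k + 2), (a - k + j) * w j * x ^ j
          + ∑ j ∈ range (k + 1), (b - j) * w j * x ^ (j + 1) := by
        rw [sum_range_succ' _ (k + 1), sum_add_distrib]
        ring
    _ = _ := by
        rw [sum_range_succ, htop, mul_zero, zero_mul, add_zero, ← sum_add_distrib]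
        exact sum_congr rfl fun j _ => by ring

theorem add_mul_sum_hypergeomCount_mul (hk : k ≤ b) (x : ℝ) :
    ((a : ℝ) + b) * ∑ j ∈ range (k + 1),
        (hypergeomCount a b k j : ℝ) * ((a - k + j) + (b - j) * x) =
      ((a : ℝ) + b - k) * (a + b).choose b * (a + b * x) := by
  have hsum : ∑ j ∈ range (k + 1), (hypergeomCount a b k j : ℝ) = (a + b).choose b := by
    exact_mod_cast sum_hypergeomCount hk
  have hmean : ((a : ℝ) + b) * ∑ j ∈ range (k + 1), (j * hypergeomCount a b k j : ℝ) =
      k * b * (a + b).choose b := by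
    exact_mod_cast add_mul_sum_mul_hypergeomCount hk
  have hsplit : ∑ j ∈ range (k + 1),
      (hypergeomCount a b k j : ℝ) * ((a - k + j) + (b - j) * x) =
      (a - k + b * x) * ∑ j ∈ range (k + 1), (hypergeomCount a b k j : ℝ) +
        (1 - x) * ∑ j ∈ range (k + 1), (j * hypergeomCount a b k j : ℝ) := by
    rw [mul_sum, mul_sum, ← sum_add_distrib]
    exact sum_congr rfl fun j _ => by ring
  rw [hsplit, hsum]
  linear_combination (1 - x) * hmean

end HypergeomCount

theorem AntivaryOn.sum_mul_sum_mul_mul_le {ι : Type*} {s : Finset ι} {w f g : ι → ℝ}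
    (hfg : AntivaryOn f g s) (hw : ∀ i ∈ s, 0 ≤ w i) :
    (∑ i ∈ s, w i) * ∑ i ∈ s, w i * f i * g i ≤
      (∑ i ∈ s, w i * f i) * ∑ i ∈ s, w i * g i := by
  have hpair : ∑ i ∈ s, ∑ j ∈ s, w i * w j * ((f i - f j) * (g i - g j)) ≤ 0 :=
    sum_nonpos fun i hi => sum_nonpos fun j hj =>
      mul_nonpos_of_nonneg_of_nonpos (mul_nonneg (hw i hi) (hw j hj))
        (hfg.sub_mul_sub_nonpos hj hi)
  have hexpand : ∑ i ∈ s, ∑ j ∈ s, w i * w j * ((f i - f j) * (g i - g j)) =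
      2 * ((∑ i ∈ s, w i) * ∑ i ∈ s, w i * f i * g i -
        (∑ i ∈ s, w i * f i) * ∑ i ∈ s, w i * g i) := by
    have hterm (i j : ι) : w i * w j * ((f i - f j) * (g i - g j)) =
        w i * f i * g i * w j + w i * (w j * f j * g j) - w i * f i * (w j * g j) -
          w i * g i * (w j * f j) := by ring
    simp only [hterm, sum_add_distrib, sum_sub_distrib, ← mul_sum, ← sum_mul]
    ring
  linarith

theorem sum_hypergeomCount_mul_pow_le {a b : ℕ} {x : ℝ} (hx₀ : 0 ≤ x) (hx₁ : x ≤ 1) {k : ℕ}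
    (hka : k ≤ a) (hkb : k ≤ b) :
    ∑ j ∈ range (k + 1), (hypergeomCount a b k j : ℝ) * x ^ j ≤
      (a + b).choose b * ((a + b * x) / (a + b)) ^ k := by
  induction k with
  | zero => simp [hypergeomCount]
  | succ k ih =>
    have hA : 0 < (a : ℝ) + b - k := by
      have : (k : ℝ) + 1 ≤ a := by exact_mod_cast hka
      linarith [(b.cast_nonneg : (0 : ℝ) ≤ b)]
    have hab : 0 < (a : ℝ) + b := by linarith [(k.cast_nonneg : (0 : ℝ) ≤ k)]
    have hC : 0 < ((a + b).choose b : ℝ) := by exact_mod_cast Nat.choose_pos (by omega)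
    have hantivary : AntivaryOn (fun j : ℕ => x ^ j)
        (fun j : ℕ => ((a : ℝ) - k + j) + (b - j) * x) ↑(range (k + 1)) := by
      have hg : Monotone fun j : ℕ => ((a : ℝ) - k + j) + (b - j) * x := fun i j hij => by
        have : (i : ℝ) ≤ j := by exact_mod_cast hij
        nlinarith
      exact ((pow_right_anti₀ hx₀ hx₁).antivary hg).antivaryOn _
    have hcheb := hantivary.sum_mul_sum_mul_mul_le fun j _ => (hypergeomCount a b k j).cast_nonneg
    rw [← Nat.cast_sum, sum_hypergeomCount (by omega),
      ← mul_sum_hypergeomCount_succ_mul_pow (by omega) (by omega)] at hcheb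
    have hmean := add_mul_sum_hypergeomCount_mul (a := a) (by omega : k ≤ b) x
    set M := ∑ j ∈ range (k + 1), (hypergeomCount a b k j : ℝ) * x ^ j
    set M' := ∑ j ∈ range (k + 2), (hypergeomCount a b (k + 1) j : ℝ) * x ^ j
    have hstep : ((a : ℝ) + b - k) * (a + b).choose b * (M' * (a + b)) ≤
        ((a : ℝ) + b - k) * (a + b).choose b * (M * (a + b * x)) := by
      have := mul_le_mul_of_nonneg_left hcheb hab.le
      rw [mul_left_comm _ M, hmean] at this
      linarith
    calc M' ≤ M * ((a + b * x) / (a + b)) := by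
          rw [mul_div_assoc', le_div_iff₀ hab]
          exact le_of_mul_le_mul_left hstep (mul_pos hA hC)
      _ ≤ (a + b).choose b * ((a + b * x) / (a + b)) ^ k * ((a + b * x) / (a + b)) :=
          mul_le_mul_of_nonneg_right (ih (by omega) (by omega)) (by positivity)
      _ = _ := by ring

theorem sum_pow_card_inter_Icc_eq {a b k : ℕ} (hk : k ≤ b) (x : ℝ) :
    ∑ S ∈ powersetCard b (Icc 1 (a + b)), x ^ #(S ∩ Icc 1 k) =
      ∑ j ∈ range (k + 1), (hypergeomCount a b k j : ℝ) * x ^ j := by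
  have hdisj : Disjoint (Icc 1 k) (Icc (k + 1) (a + b)) :=
    disjoint_left.2 fun i hi hi' => by simp only [mem_Icc] at hi hi'; omega
  have hunion : Icc 1 (a + b) = Icc 1 k ∪ Icc (k + 1) (a + b) := by
    ext i
    simp only [mem_Icc, mem_union]
    omega
  have hmaps : ∀ S ∈ powersetCard b (Icc 1 (a + b)), #(S ∩ Icc 1 k) ∈ range (k + 1) :=
    fun S _ => mem_range_succ_iff.2 ((card_le_card inter_subset_right).trans (by simp))
  rw [← sum_fiberwise_of_maps_to' hmaps]
  refine sum_congr rfl fun j hj => ?_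
  rw [sum_const, nsmul_eq_mul, hunion,
    card_filter_card_inter_eq hdisj (by simp only [mem_range] at hj; omega)]
  simp only [hypergeomCount, Nat.card_Icc, add_tsub_cancel_right]
  push_cast
  rfl

theorem card_filter_le_exp_mul_sum_pow {ι : Type*} (s : Finset ι) (f : ι → ℕ) (t : ℝ)
    {l : ℝ} (hl : 0 ≤ l) :
    (#{i ∈ s | (f i : ℝ) ≤ t} : ℝ) ≤ exp (l * t) * ∑ i ∈ s, exp (-l) ^ f i := by
  rw [card_filter, Nat.cast_sum, mul_sum]
  refine sum_le_sum fun i _ => ?_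
  split_ifs with h
  · rw [← exp_nat_mul, ← exp_add, Nat.cast_one]
    exact one_le_exp (by nlinarith)
  · rw [Nat.cast_zero]
    positivity

open ProbabilityTheory MeasureTheory in
theorem one_sub_add_mul_exp_le {p : ℝ} (hp : p ∈ unitInterval) (t : ℝ) :
    1 - p + p * exp t ≤ exp (p * t + t ^ 2 / 8) := by
  have h := (hasSubgaussianMGF_of_mem_Icc (μ := bernoulliMeasure true false ⟨p, hp⟩)
    (X := fun b => if b then (1 : ℝ) else 0) (measurable_of_countable _).aemeasurable
    (a := 0) (b := 1) (ae_of_all _ fun b => by cases b <;> simp)).mgf_le t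
  simp only [mgf, integral_bernoulliMeasure, ↓reduceIte, smul_eq_mul, mul_one, Bool.false_eq_true,
    mul_zero, add_zero, zero_sub, mul_neg, sub_zero, nnnorm_one, one_div, inv_pow, NNReal.coe_inv,
    NNReal.coe_pow, NNReal.coe_ofNat] at h
  have e₁ : exp (p * t) * exp (t * (1 - p)) = exp t := by rw [← exp_add]; ring_nf
  have e₀ : exp (p * t) * exp (-(t * p)) = 1 := by rw [← exp_add, ← exp_zero]; ring_nf
  calc 1 - p + p * exp t
      = exp (p * t) * (p * exp (t * (1 - p)) + (1 - p) * exp (-(t * p))) := by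
        linear_combination p * e₁.symm + (1 - p) * e₀.symm
    _ ≤ exp (p * t) * exp ((2 ^ 2)⁻¹ * t ^ 2 / 2) := by gcongr
    _ = exp (p * t + t ^ 2 / 8) := by rw [← exp_add]; ring_nf

theorem card_filter_card_inter_Icc_le {a b k : ℕ} (hka : k ≤ a) (hkb : k ≤ b) (t : ℝ) {l : ℝ}
    (hl : 0 ≤ l) :
    (#{S ∈ powersetCard b (Icc 1 (a + b)) | (#(S ∩ Icc 1 k) : ℝ) ≤ t} : ℝ) ≤
      exp (l * t) * ((a + b).choose b * ((a + b * exp (-l)) / (a + b)) ^ k) := by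
  calc _ ≤ exp (l * t) * ∑ S ∈ powersetCard b (Icc 1 (a + b)), exp (-l) ^ #(S ∩ Icc 1 k) :=
        card_filter_le_exp_mul_sum_pow _ _ _ hl
    _ ≤ _ := by
        rw [sum_pow_card_inter_Icc_eq hkb]
        gcongr
        exact sum_hypergeomCount_mul_pow_le (exp_pos _).le (exp_le_one_iff.2 (neg_nonpos.2 hl))
          hka hkb

theorem card_filter_card_inter_Icc_le_exp {a b k : ℕ} (hka : k ≤ a) (hkb : k ≤ b) (hk₀ : 0 < k)
    {δ : ℝ} (hδ : 0 ≤ δ) :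
    (#{S ∈ powersetCard b (Icc 1 (a + b)) |
        (#(S ∩ Icc 1 k) : ℝ) ≤ k * b / (a + b) - δ} : ℝ) ≤
      (a + b).choose b * exp (-(2 * δ ^ 2) / k) := by
  have hab : (0 : ℝ) < a + b := by exact_mod_cast (show 0 < a + b by omega)
  set p : ℝ := b / (a + b)
  have hp : p ∈ unitInterval := ⟨by positivity, div_le_one_of_le₀ (by simp) hab.le⟩
  -- `l = 4 δ / k` minimises the Chernoff exponent `-l δ + k l² / 8`.
  set l : ℝ := 4 * δ / k
  have hbase : ((a : ℝ) + b * exp (-l)) / (a + b) = 1 - p + p * exp (-l) := by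
    simp only [p]; field_simp; ring
  calc _ ≤ exp (l * (k * b / (a + b) - δ)) * ((a + b).choose b * (1 - p + p * exp (-l)) ^ k) := by
        rw [← hbase]
        exact card_filter_card_inter_Icc_le hka hkb _ (by positivity)
    _ ≤ exp (l * (k * b / (a + b) - δ)) *
          ((a + b).choose b * exp (p * -l + (-l) ^ 2 / 8) ^ k) := by
        gcongr
        · linarith [hp.2, mul_nonneg hp.1 (exp_pos (-l)).le]
        · exact one_sub_add_mul_exp_le hp _
    _ = _ := by
        rw [← exp_nat_mul, mul_left_comm, ← exp_add]
        congr 2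
        simp only [p, l]
        field_simp
        ring

/-- hypergeometric lower tail, Hush–Scovel: for a uniformly random
`m_b`-subset `S` of `{1, …, m_a + m_b}` with `n ≤ min(m_a, m_b)` and `k ≤ n`, the
count `N_kb = |S ∩ [k]|` with mean `k m_b/(m_a + m_b)` satisfies, for all `δ ≥ 2`,
`P(N_kb ≤ E[N_kb] - δ) ≤ exp(-2(δ² - 1)/(k+1))`. -/
theorem hypergeometric_lower_tail
    (m_a m_b n k : ℕ) (hn : n ≤ min m_a m_b) (hk : k ≤ n)
    (δ : ℝ) (hδ : 2 ≤ δ) :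
    (((Finset.powersetCard m_b (Finset.Icc 1 (m_a + m_b))).filter
        (fun S => ((S ∩ Finset.Icc 1 k).card : ℝ)
          ≤ (k : ℝ) * (m_b : ℝ) / ((m_a : ℝ) + (m_b : ℝ)) - δ)).card : ℝ)
      / ((Finset.powersetCard m_b (Finset.Icc 1 (m_a + m_b))).card : ℝ)
    ≤ Real.exp (-(2 * (δ ^ 2 - 1)) / ((k : ℝ) + 1)) := by
  have hka : k ≤ m_a := hk.trans (hn.trans (min_le_left _ _))
  have hkb : k ≤ m_b := hk.trans (hn.trans (min_le_right _ _))
  obtain rfl | hk₀ := Nat.eq_zero_or_pos k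
  · rw [filter_false_of_mem fun S _ => by
        simp only [Order.lt_one_iff, Icc_eq_empty_of_lt, inter_empty, card_empty,
          CharP.cast_eq_zero, zero_mul, zero_div, zero_sub, Left.nonneg_neg_iff, not_le]
        linarith,
      card_empty, Nat.cast_zero, zero_div]
    positivity
  have hC : (0 : ℝ) < (m_a + m_b).choose m_b := Nat.cast_pos.2 (Nat.choose_pos (by omega))
  rw [card_powersetCard, Nat.card_Icc, add_tsub_cancel_right, div_le_iff₀ hC]
  calc _ ≤ ((m_a + m_b).choose m_b : ℝ) * exp (-(2 * δ ^ 2) / k) :=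
        card_filter_card_inter_Icc_le_exp hka hkb hk₀ (by linarith)
    _ ≤ ((m_a + m_b).choose m_b : ℝ) * exp (-(2 * (δ ^ 2 - 1)) / ((k : ℝ) + 1)) := by
        gcongr ?_ * exp ?_
        rw [div_le_div_iff₀ (by positivity) (by positivity)]
        nlinarith
    _ = _ := mul_comm _ _
end
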